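/- Let G be a group and let T be a G-tree such that the G-action on T is minimal and nonelementary. If iota is an isometry of T that commutes with the G-action (that is, iota(gx) = g·iota(x) for every x in T and g in G), then iota is the identity. In particular, the center Z(G) of G lies in the kernel of the G-action on T. -/

import Mathlib

noncomputable section

open Metric Set

universe u v

/-- A geodesic metric space: any two points are joined by an isometrically
parametrized segment. -/
def GeodesicSpace (Y : Type*) [MetricSpace Y] : Prop :=
  ∀ x y : Y, ∃ f : ℝ → Y, f 0 = x ∧ f (dist x y) = y ∧
    ∀ s ∈ Set.Icc (0:ℝ) (dist x y), ∀ t ∈ Set.Icc (0:ℝ) (dist x y),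
      dist (f s) (f t) = |s - t|

/-- Gromov hyperbolicity (four-point condition) with constant `δ`. -/
def GromovHyperbolic (Y : Type*) [MetricSpace Y] (δ : ℝ) : Prop :=
  ∀ x y z w : Y, dist x y + dist z w ≤ max (dist x z + dist y w) (dist x w + dist y z) + 2 * δ

/-- A Gromov hyperbolic geodesic metric space. -/
def HyperbolicGeodesicSpace (Y : Type*) [MetricSpace Y] : Prop :=
  GeodesicSpace Y ∧ ∃ δ : ℝ, 0 ≤ δ ∧ GromovHyperbolic Y δ

/-- An isometric action `ρ` of `G` on `Y` is acylindrical if for every `R > 0` there are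
`L > 0` and `N` such that for any two points at distance `> L`, at most `N` elements of `G`
move both points by less than `R`. -/
def IsAcylindrical {G : Type*} [Group G] {Y : Type*} [MetricSpace Y] (ρ : G →* (Y ≃ᵢ Y)) : Prop :=
  ∀ R : ℝ, 0 < R → ∃ L : ℝ, 0 < L ∧ ∃ N : ℕ, ∀ x y : Y, L < dist x y →
    ∃ s : Finset G, s.card ≤ N ∧
      ∀ g : G, dist x (ρ g x) < R → dist y (ρ g y) < R → g ∈ s

/-- A group is virtually cyclic if it has a cyclic subgroup of finite index. -/
def VirtuallyCyclic (G : Type*) [Group G] : Prop :=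
  ∃ H : Subgroup G, H.FiniteIndex ∧ IsCyclic ↥H

/-- A group is acylindrically hyperbolic if it is not virtually cyclic and admits an
acylindrical isometric action with unbounded orbits on a Gromov hyperbolic geodesic space
(this is equivalent to admitting a nonelementary acylindrical action on such a space). -/
def AcylindricallyHyperbolic (G : Type u) [Group G] : Prop :=
  ¬ VirtuallyCyclic G ∧
    ∃ (Y : Type u) (_ : MetricSpace Y) (ρ : G →* (Y ≃ᵢ Y)),
      HyperbolicGeodesicSpace Y ∧ IsAcylindrical ρ ∧
      ∃ y : Y, ¬ Bornology.IsBounded (Set.range fun g : G => ρ g y)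

/-- The metric segment between `x` and `y`; in a real tree this is the unique arc
joining `x` to `y`. -/
def seg {T : Type*} [MetricSpace T] (x y : T) : Set T :=
  {z : T | dist x z + dist z y = dist x y}

/-- `A` is a (parametrized) arc from `x` to `y`. -/
def IsArcBetween {T : Type*} [MetricSpace T] (x y : T) (A : Set T) : Prop :=
  ∃ f : ℝ → T, ContinuousOn f (Set.Icc 0 1) ∧ Set.InjOn f (Set.Icc 0 1) ∧
    f 0 = x ∧ f 1 = y ∧ A = f '' Set.Icc 0 1

/-- A real tree: a geodesic metric space in which every pair of points is joined by a
unique arc. -/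
def IsRealTree (T : Type*) [MetricSpace T] : Prop :=
  GeodesicSpace T ∧
    ∀ (x y : T) (A B : Set T), IsArcBetween x y A → IsArcBetween x y B → A = B

section TreeAction

variable {G : Type*} [Group G] {T : Type*} [MetricSpace T]

/-- Translation length of `g` for the action `ρ`. -/
def transLen (ρ : G →* (T ≃ᵢ T)) (g : G) : ℝ := ⨅ x : T, dist x (ρ g x)

/-- The characteristic set of `g`: the set of points minimally displaced by `g`.
For an elliptic element this is its fixed-point set, and for a loxodromic element
this is its axis. -/
def charSet (ρ : G →* (T ≃ᵢ T)) (g : G) : Set T :=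
  {x : T | dist x (ρ g x) = transLen ρ g}

/-- `g` is elliptic: it fixes a point. -/
def Elliptic (ρ : G →* (T ≃ᵢ T)) (g : G) : Prop := ∃ x : T, ρ g x = x

/-- `A` is an axis for `g`: an invariant isometric copy of `ℝ` on which `g` acts as a
nontrivial translation. -/
def IsAxis (ρ : G →* (T ≃ᵢ T)) (g : G) (A : Set T) : Prop :=
  (∃ f : ℝ → T, Isometry f ∧ Set.range f = A) ∧
  (∀ x : T, x ∈ A ↔ ρ g x ∈ A) ∧
  ∃ τ : ℝ, 0 < τ ∧ ∀ x ∈ A, dist x (ρ g x) = τ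

/-- `g` is loxodromic: it has an axis. (For a loxodromic element `g`, the axis coincides
with `charSet ρ g`.) -/
def Loxodromic (ρ : G →* (T ≃ᵢ T)) (g : G) : Prop := ∃ A : Set T, IsAxis ρ g A

/-- A subtree is a convex subset. -/
def IsSubtree {T' : Type*} [MetricSpace T'] (A : Set T') : Prop :=
  ∀ x ∈ A, ∀ y ∈ A, seg x y ⊆ A

/-- The action is minimal: there is no proper nonempty invariant subtree. -/
def MinimalTreeAction (ρ : G →* (T ≃ᵢ T)) : Prop :=
  ∀ A : Set T, A.Nonempty → IsSubtree A → (∀ (g : G), ∀ x ∈ A, ρ g x ∈ A) → A = Set.univ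

/-- The action is nonelementary: there are two loxodromic elements whose axes intersect
in a compact (possibly empty) set. -/
def NonelementaryTreeAction (ρ : G →* (T ≃ᵢ T)) : Prop :=
  ∃ g h : G, Loxodromic ρ g ∧ Loxodromic ρ h ∧
    IsCompact (charSet ρ g ∩ charSet ρ h)

end TreeAction


/-!
The fixed-point set of `ι` is a subtree, because segments are unique geodesics, and it is
`G`-invariant because `ι` commutes with the action; by minimality it is enough to find one fixed
point. Take loxodromic `g` and `h` whose axes meet in a compact set. Since `ι` preserves
displacement functions it preserves both axes, and since it commutes with the translation `g` it
acts on the axis of `g` as a translation by some `e`. The projections of the axis of `h` to the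
axis of `g` lie in the compact intersection of the axes, except possibly for a single point, so
they form a nonempty bounded set which `ι` shifts by `e`. Hence `e = 0`.
-/

def concatPath {α : Type*} (F₁ F₂ : ℝ → α) (L₁ : ℝ) : ℝ → α :=
  fun u => if u ≤ L₁ then F₁ u else F₂ (u - L₁)

theorem concatPath_eqOn_left {α : Type*} (F₁ F₂ : ℝ → α) (L₁ : ℝ) :
    EqOn (concatPath F₁ F₂ L₁) F₁ (Iic L₁) := fun _ hu => if_pos hu

theorem concatPath_eqOn_right {α : Type*} {F₁ F₂ : ℝ → α} {L₁ : ℝ} (h : F₁ L₁ = F₂ 0) :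
    EqOn (concatPath F₁ F₂ L₁) (fun u => F₂ (u - L₁)) (Ici L₁) := fun u hu => by
  rcases (mem_Ici.1 hu).eq_or_lt with rfl | hlt
  · simp [concatPath, h]
  · simp [concatPath, not_le.2 hlt]

section Segment

variable {T : Type*} [MetricSpace T]

theorem seg_comm (x y : T) : seg x y = seg y x := by
  ext z
  change _ = _ ↔ _ = _
  rw [dist_comm x z, dist_comm z y, dist_comm x y, add_comm]

theorem mem_seg_iff {x y z : T} : z ∈ seg x y ↔ dist x z + dist z y = dist x y := Iff.rfl

structure IsGeodesicPath (F : ℝ → T) (x y : T) (L : ℝ) : Prop where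
  source : F 0 = x
  target : F L = y
  dist_eq : ∀ s ∈ Icc 0 L, ∀ t ∈ Icc 0 L, dist (F s) (F t) = |s - t|

theorem GeodesicSpace.exists_isGeodesicPath (hT : GeodesicSpace T) (x y : T) :
    ∃ F, IsGeodesicPath F x y (dist x y) :=
  let ⟨F, h0, h1, hd⟩ := hT x y
  ⟨F, h0, h1, hd⟩

namespace IsGeodesicPath

variable {F : ℝ → T} {x y : T} {L t : ℝ}

theorem dist_source (h : IsGeodesicPath F x y L) (ht : t ∈ Icc 0 L) : dist x (F t) = t := by
  rw [← h.source, h.dist_eq 0 ⟨le_rfl, ht.1.trans ht.2⟩ t ht, zero_sub, abs_neg,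
    abs_of_nonneg ht.1]

theorem dist_target (h : IsGeodesicPath F x y L) (ht : t ∈ Icc 0 L) :
    dist (F t) y = L - t := by
  rw [← h.target, h.dist_eq t ht L ⟨ht.1.trans ht.2, le_rfl⟩, abs_sub_comm,
    abs_of_nonneg (sub_nonneg.2 ht.2)]

theorem dist_eq_length (h : IsGeodesicPath F x y L) (hL : 0 ≤ L) : dist x y = L := by
  simpa [h.target] using h.dist_source ⟨hL, le_rfl⟩

theorem mem_seg (h : IsGeodesicPath F x y L) (ht : t ∈ Icc 0 L) : F t ∈ seg x y := by
  change _ + _ = _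
  rw [h.dist_source ht, h.dist_target ht, h.dist_eq_length (ht.1.trans ht.2)]
  ring

theorem lipschitzOnWith (h : IsGeodesicPath F x y L) : LipschitzOnWith 1 F (Icc 0 L) :=
  .of_dist_le_mul fun s hs t ht => by simp [h.dist_eq s hs t ht, Real.dist_eq]

theorem injOn (h : IsGeodesicPath F x y L) : InjOn F (Icc 0 L) := fun s hs t ht hst => by
  have := h.dist_eq s hs t ht
  rwa [hst, dist_self, eq_comm, abs_eq_zero, sub_eq_zero] at this

theorem restrict (h : IsGeodesicPath F x y L) (ht : t ∈ Icc 0 L) :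
    IsGeodesicPath F x (F t) t :=
  ⟨h.source, rfl, fun s hs u hu =>
    h.dist_eq s ⟨hs.1, hs.2.trans ht.2⟩ u ⟨hu.1, hu.2.trans ht.2⟩⟩

theorem shift (h : IsGeodesicPath F x y L) (ht : t ∈ Icc 0 L) :
    IsGeodesicPath (fun u => F (t + u)) (F t) y (L - t) := by
  refine ⟨by simp, by simpa using h.target, fun s hs u hu => ?_⟩
  rw [h.dist_eq _ ⟨by linarith [hs.1, ht.1], by linarith [hs.2]⟩ _
    ⟨by linarith [hu.1, ht.1], by linarith [hu.2]⟩, add_sub_add_left_eq_sub]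

theorem reverse (h : IsGeodesicPath F x y L) : IsGeodesicPath (fun u => F (L - u)) y x L := by
  refine ⟨by simpa using h.target, by simpa using h.source, fun s hs u hu => ?_⟩
  rw [h.dist_eq _ ⟨by linarith [hs.2], by linarith [hs.1]⟩ _
    ⟨by linarith [hu.2], by linarith [hu.1]⟩, sub_sub_sub_cancel_left, abs_sub_comm]

end IsGeodesicPath

theorem isArcBetween_image_Icc {H : ℝ → T} {L : ℝ} (hL : 0 < L)
    (hcont : ContinuousOn H (Icc 0 L)) (hinj : InjOn H (Icc 0 L)) :
    IsArcBetween (H 0) (H L) (H '' Icc 0 L) := by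
  have himg : (L * ·) '' Icc (0 : ℝ) 1 = Icc 0 L := by
    simpa using image_mul_left_Icc' hL 0 1
  have hmaps : MapsTo (L * ·) (Icc (0 : ℝ) 1) (Icc 0 L) := himg ▸ mapsTo_image _ _
  refine ⟨fun t => H (L * t), hcont.comp (continuous_const_mul L).continuousOn hmaps,
    fun s hs t ht hst => mul_left_cancel₀ hL.ne' (hinj (hmaps hs) (hmaps ht) hst),
    by simp, by simp, ?_⟩
  rw [← himg, image_image]

theorem IsGeodesicPath.isArcBetween {F : ℝ → T} {x y : T} {L : ℝ}
    (h : IsGeodesicPath F x y L) (hL : 0 < L) : IsArcBetween x y (F '' Icc 0 L) := by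
  simpa only [h.source, h.target] using
    isArcBetween_image_Icc hL h.lipschitzOnWith.continuousOn h.injOn

namespace IsGeodesicPath

variable {F₁ F₂ : ℝ → T} {x w y : T} {L₁ L₂ : ℝ}

theorem continuousOn_concatPath (h₁ : IsGeodesicPath F₁ x w L₁)
    (h₂ : IsGeodesicPath F₂ w y L₂) (hL₁ : 0 ≤ L₁) (hL₂ : 0 ≤ L₂) :
    ContinuousOn (concatPath F₁ F₂ L₁) (Icc 0 (L₁ + L₂)) := by
  rw [← Icc_union_Icc_eq_Icc hL₁ (by linarith)]
  refine ContinuousOn.union_of_isClosed ?_ ?_ isClosed_Icc isClosed_Icc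
  · exact h₁.lipschitzOnWith.continuousOn.congr
      ((concatPath_eqOn_left F₁ F₂ L₁).mono Icc_subset_Iic_self)
  · refine (h₂.lipschitzOnWith.continuousOn.comp (continuous_sub_right L₁).continuousOn
      fun u hu => ⟨by linarith [hu.1], by linarith [hu.2]⟩).congr ?_
    exact (concatPath_eqOn_right (h₁.target.trans h₂.source.symm)).mono Icc_subset_Ici_self

theorem injOn_concatPath (h₁ : IsGeodesicPath F₁ x w L₁) (h₂ : IsGeodesicPath F₂ w y L₂)
    (hL₁ : 0 ≤ L₁) (hmeet : ∀ s ∈ Icc 0 L₁, ∀ u ∈ Icc 0 L₂, F₁ s = F₂ u → u = 0) :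
    InjOn (concatPath F₁ F₂ L₁) (Icc 0 (L₁ + L₂)) := by
  set H := concatPath F₁ F₂ L₁
  have hH₁ : ∀ s ∈ Icc 0 L₁, H s = F₁ s := fun s hs => concatPath_eqOn_left F₁ F₂ L₁ hs.2
  have hH₂ : ∀ u ∈ Icc L₁ (L₁ + L₂), H u = F₂ (u - L₁) ∧ u - L₁ ∈ Icc 0 L₂ := fun u hu =>
    ⟨concatPath_eqOn_right (h₁.target.trans h₂.source.symm) hu.1,
      by linarith [hu.1], by linarith [hu.2]⟩
  have hleft : ∀ s ∈ Icc 0 L₁, ∀ v ∈ Icc 0 (L₁ + L₂), H s = H v → s = v := by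
    intro s hs v hv hsv
    rcases le_total v L₁ with hv₁ | hv₁
    · exact h₁.injOn hs ⟨hv.1, hv₁⟩ (by rwa [hH₁ s hs, hH₁ v ⟨hv.1, hv₁⟩] at hsv)
    · obtain ⟨hHv, hv'⟩ := hH₂ v ⟨hv₁, hv.2⟩
      have := hmeet s hs _ hv' (by rwa [hH₁ s hs, hHv] at hsv)
      obtain rfl : v = L₁ := by linarith
      exact h₁.injOn hs ⟨hL₁, le_rfl⟩ (by rwa [hH₁ s hs, hH₁ v ⟨hL₁, le_rfl⟩] at hsv)
  intro s hs v hv hsv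
  rcases le_total s L₁ with hs₁ | hs₁
  · exact hleft s ⟨hs.1, hs₁⟩ v hv hsv
  rcases le_total v L₁ with hv₁ | hv₁
  · exact (hleft v ⟨hv.1, hv₁⟩ s hs hsv.symm).symm
  obtain ⟨hHs, hs'⟩ := hH₂ s ⟨hs₁, hs.2⟩
  obtain ⟨hHv, hv'⟩ := hH₂ v ⟨hv₁, hv.2⟩
  linarith [h₂.injOn hs' hv' (by rwa [hHs, hHv] at hsv)]

end IsGeodesicPath

end Segment

namespace IsRealTree

variable {T : Type*} [MetricSpace T]

/-- The concatenation is an arc from `x` to `y`, so by uniqueness of arcs it has the same image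
as `F`. -/
theorem mem_image_of_concat (hT : IsRealTree T) {F₁ F₂ F : ℝ → T} {x w y : T} {L₁ L₂ L : ℝ}
    (h₁ : IsGeodesicPath F₁ x w L₁) (h₂ : IsGeodesicPath F₂ w y L₂) (hL₁ : 0 ≤ L₁)
    (hL₂ : 0 ≤ L₂) (hmeet : ∀ s ∈ Icc 0 L₁, ∀ u ∈ Icc 0 L₂, F₁ s = F₂ u → u = 0)
    (hF : IsGeodesicPath F x y L) (hL : 0 ≤ L) : w ∈ F '' Icc 0 L := by
  rcases hL₁.eq_or_lt with rfl | hL₁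
  · exact ⟨0, ⟨le_rfl, hL⟩, by rw [hF.source, ← h₁.source, h₁.target]⟩
  have hinj := h₁.injOn_concatPath h₂ hL₁.le hmeet
  have hH0 : concatPath F₁ F₂ L₁ 0 = x := by
    rw [concatPath_eqOn_left F₁ F₂ L₁ hL₁.le, h₁.source]
  have hHL : concatPath F₁ F₂ L₁ (L₁ + L₂) = y := by
    rw [concatPath_eqOn_right (h₁.target.trans h₂.source.symm)
      (mem_Ici.2 (le_add_of_nonneg_right hL₂))]
    simpa using h₂.target
  have harc := isArcBetween_image_Icc (by linarith)
    (h₁.continuousOn_concatPath h₂ hL₁.le hL₂) hinj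
  rw [hH0, hHL] at harc
  have hLpos : 0 < L := by
    refine hL.lt_of_ne fun hL0 => ?_
    have hxy : concatPath F₁ F₂ L₁ 0 = concatPath F₁ F₂ L₁ (L₁ + L₂) := by
      rw [hH0, hHL, ← dist_eq_zero, hF.dist_eq_length hL, hL0]
    linarith [hinj ⟨le_rfl, by linarith⟩ ⟨by linarith, le_rfl⟩ hxy]
  rw [← hT.2 x y _ _ harc (hF.isArcBetween hLpos)]
  exact ⟨L₁, ⟨hL₁.le, by linarith⟩,
    by rw [concatPath_eqOn_left F₁ F₂ L₁ (mem_Iic.2 le_rfl), h₁.target]⟩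

theorem seg_eq_image (hT : IsRealTree T) {F : ℝ → T} {x y : T} {L : ℝ}
    (hF : IsGeodesicPath F x y L) (hL : 0 ≤ L) : seg x y = F '' Icc 0 L := by
  refine Subset.antisymm (fun z hz => ?_) (image_subset_iff.2 fun t ht => hF.mem_seg ht)
  obtain ⟨F₁, h₁⟩ := hT.1.exists_isGeodesicPath x z
  obtain ⟨F₂, h₂⟩ := hT.1.exists_isGeodesicPath z y
  refine hT.mem_image_of_concat h₁ h₂ dist_nonneg dist_nonneg (fun s hs u hu hsu => ?_) hF hL
  have htri := dist_triangle x (F₁ s) y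
  rw [h₁.dist_source hs, hsu, h₂.dist_target hu] at htri
  linarith [mem_seg_iff.1 hz, hs.2, hu.1]

theorem mem_seg_of_concat (hT : IsRealTree T) {F₁ F₂ : ℝ → T} {x w y : T} {L₁ L₂ : ℝ}
    (h₁ : IsGeodesicPath F₁ x w L₁) (h₂ : IsGeodesicPath F₂ w y L₂) (hL₁ : 0 ≤ L₁)
    (hL₂ : 0 ≤ L₂) (hmeet : ∀ s ∈ Icc 0 L₁, ∀ u ∈ Icc 0 L₂, F₁ s = F₂ u → u = 0) :
    w ∈ seg x y := by
  obtain ⟨F, hF⟩ := hT.1.exists_isGeodesicPath x y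
  rw [hT.seg_eq_image hF dist_nonneg]
  exact hT.mem_image_of_concat h₁ h₂ hL₁ hL₂ hmeet hF dist_nonneg

theorem dist_eq_abs_sub_of_mem_seg (hT : IsRealTree T) {x y z w : T} (hz : z ∈ seg x y)
    (hw : w ∈ seg x y) : dist z w = |dist x z - dist x w| := by
  obtain ⟨F, hF⟩ := hT.1.exists_isGeodesicPath x y
  rw [hT.seg_eq_image hF dist_nonneg] at hz hw
  obtain ⟨s, hs, rfl⟩ := hz
  obtain ⟨t, ht, rfl⟩ := hw
  rw [hF.dist_source hs, hF.dist_source ht, hF.dist_eq s hs t ht]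

theorem eq_of_mem_seg_of_dist_eq (hT : IsRealTree T) {x y z w : T} (hz : z ∈ seg x y)
    (hw : w ∈ seg x y) (hd : dist x z = dist x w) : z = w :=
  dist_eq_zero.1 (by rw [hT.dist_eq_abs_sub_of_mem_seg hz hw, hd, sub_self, abs_zero])

theorem exists_median (hT : IsRealTree T) (x y k : T) :
    ∃ w ∈ seg x y, w ∈ seg x k ∧ w ∈ seg k y := by
  obtain ⟨F₁, h₁⟩ := hT.1.exists_isGeodesicPath x k
  obtain ⟨F₂, h₂⟩ := hT.1.exists_isGeodesicPath x y
  have hm₁ : Icc 0 (min (dist x k) (dist x y)) ⊆ Icc 0 (dist x k) :=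
    Icc_subset_Icc_right (min_le_left _ _)
  have hm₂ : Icc 0 (min (dist x k) (dist x y)) ⊆ Icc 0 (dist x y) :=
    Icc_subset_Icc_right (min_le_right _ _)
  -- `w` is the last point where the geodesics from `x` to `k` and to `y` agree
  set S := Icc 0 (min (dist x k) (dist x y)) ∩ {t | F₁ t = F₂ t}
  have hS0 : 0 ∈ S := ⟨⟨le_rfl, le_min dist_nonneg dist_nonneg⟩, h₁.source.trans h₂.source.symm⟩
  have hSbdd : BddAbove S := bddAbove_Icc.mono inter_subset_left
  have hSclosed : IsClosed S :=
    ((h₁.lipschitzOnWith.continuousOn.mono hm₁).prodMk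
      (h₂.lipschitzOnWith.continuousOn.mono hm₂)).preimage_isClosed_of_isClosed
      isClosed_Icc isClosed_diagonal
  set a := sSup S
  have haS : a ∈ S := hSclosed.csSup_mem ⟨0, hS0⟩ hSbdd
  have ha₁ : a ∈ Icc 0 (dist x k) := hm₁ haS.1
  have ha₂ : a ∈ Icc 0 (dist x y) := hm₂ haS.1
  have hk : IsGeodesicPath (fun u => F₁ (dist x k - u)) k (F₁ a) (dist x k - a) := by
    have := h₁.reverse.restrict ⟨sub_nonneg.2 ha₁.2, by linarith [ha₁.1]⟩
    simpa only [sub_sub_cancel] using this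
  have hy : IsGeodesicPath (fun u => F₂ (a + u)) (F₁ a) y (dist x y - a) := by
    rw [haS.2]
    exact h₂.shift ha₂
  refine ⟨F₁ a, by rw [haS.2]; exact h₂.mem_seg ha₂, h₁.mem_seg ha₁,
    hT.mem_seg_of_concat hk hy (by linarith [ha₁.2]) (by linarith [ha₂.2])
      fun s hs u hu hsu => ?_⟩
  have hsu' : dist x k - s = a + u := by
    rw [← h₁.dist_source (t := dist x k - s) ⟨by linarith [hs.2, ha₁.1], by linarith [hs.1]⟩,
      ← h₂.dist_source (t := a + u) ⟨by linarith [ha₂.1, hu.1], by linarith [hu.2]⟩, hsu]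
  have hau : a + u ∈ S :=
    ⟨⟨by linarith [ha₁.1, hu.1], le_min (by linarith [hs.1]) (by linarith [hu.2])⟩,
      (congrArg F₁ hsu').symm.trans hsu⟩
  linarith [le_csSup hSbdd hau, hu.1]

theorem dist_eq_add_add_of_mem_seg (hT : IsRealTree T) {a b c d : T} (hb : b ∈ seg a c)
    (hc : c ∈ seg b d) (hbc : b ≠ c) : dist a d = dist a b + dist b c + dist c d := by
  obtain ⟨w, hwad, hwac, hwcd⟩ := hT.exists_median a d c
  -- `b` and `w` both lie on the segment from `a` to `c`, which forces `w = c`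
  have hbw : dist b w = dist b c + dist c w := by
    linarith [dist_triangle b w d, dist_triangle b c w,
      mem_seg_iff.1 hwcd, mem_seg_iff.1 hc]
  have hbw' := hT.dist_eq_abs_sub_of_mem_seg hb hwac
  have hcw : dist c w = 0 := by
    have := dist_pos.2 hbc
    rcases abs_cases (dist a b - dist a w) with ⟨h, -⟩ | ⟨h, -⟩ <;>
      linarith [mem_seg_iff.1 hb, mem_seg_iff.1 hwac,
        dist_comm w c, dist_nonneg (x := c) (y := w)]
  obtain rfl : c = w := dist_eq_zero.1 hcw
  linarith [mem_seg_iff.1 hwad, mem_seg_iff.1 hb]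

end IsRealTree

section Line

variable {T : Type*} [MetricSpace T] {f : ℝ → T}

theorem Isometry.exists_isGeodesicPath (hf : Isometry f) (s t : ℝ) :
    ∃ F, IsGeodesicPath F (f s) (f t) |t - s| ∧ ∀ u, F u ∈ range f := by
  rcases le_total s t with h | h
  · refine ⟨fun u => f (s + u), ⟨by simp, by simp [abs_of_nonneg (sub_nonneg.2 h)],
      fun u _ v _ => ?_⟩, fun u => mem_range_self _⟩
    rw [hf.dist_eq, Real.dist_eq, add_sub_add_left_eq_sub]
  · refine ⟨fun u => f (s - u), ⟨by simp, by simp [abs_of_nonpos (sub_nonpos.2 h)],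
      fun u _ v _ => ?_⟩, fun u => mem_range_self _⟩
    rw [hf.dist_eq, Real.dist_eq, sub_sub_sub_cancel_left, abs_sub_comm]

theorem IsRealTree.seg_subset_range (hT : IsRealTree T) (hf : Isometry f) (s t : ℝ) :
    seg (f s) (f t) ⊆ range f := by
  obtain ⟨F, hF, hFf⟩ := hf.exists_isGeodesicPath s t
  rw [hT.seg_eq_image hF (abs_nonneg _)]
  exact image_subset_iff.2 fun u _ => hFf u

/-- `f α` is the nearest-point projection of `x` to the line `f`, in the strong form that holds
in real trees. -/
def IsLineProjection (f : ℝ → T) (x : T) (α : ℝ) : Prop :=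
  ∀ t, dist x (f t) = dist x (f α) + |t - α|

theorem IsLineProjection.mem_seg (hf : Isometry f) {x : T} {α : ℝ}
    (h : IsLineProjection f x α) (t : ℝ) : f α ∈ seg x (f t) := by
  rw [mem_seg_iff, hf.dist_eq, Real.dist_eq, h t, abs_sub_comm]

theorem IsLineProjection.map {x : T} {α e : ℝ} (h : IsLineProjection f x α) (ψ : T ≃ᵢ T)
    (hψ : ∀ t, ψ (f t) = f (t + e)) : IsLineProjection f (ψ x) (α + e) := by
  have hψ' : ∀ t, f t = ψ (f (t - e)) := fun t => by rw [hψ, sub_add_cancel]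
  intro t
  rw [hψ' t, hψ' (α + e), ψ.dist_eq, ψ.dist_eq, h, add_sub_cancel_right, sub_sub, add_comm e]

theorem IsRealTree.exists_isLineProjection (hT : IsRealTree T) (hf : Isometry f) (x : T) :
    ∃ α, IsLineProjection f x α := by
  obtain ⟨α, hα⟩ : ∃ α, ∀ t, dist x (f α) ≤ dist x (f t) := by
    refine (continuous_const.dist hf.continuous).exists_forall_le' 0 ?_
    filter_upwards [(isCompact_closedBall (0 : ℝ) (2 * dist x (f 0))).compl_mem_cocompact]
      with t ht
    have htri := dist_triangle (f 0) x (f t)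
    rw [hf.dist_eq, Real.dist_eq, zero_sub, abs_neg, dist_comm] at htri
    simp only [mem_compl_iff, mem_closedBall, Real.dist_eq, sub_zero, not_le] at ht
    linarith
  refine ⟨α, fun t => ?_⟩
  obtain ⟨F₁, h₁⟩ := hT.1.exists_isGeodesicPath x (f α)
  obtain ⟨F₂, h₂, hF₂⟩ := hf.exists_isGeodesicPath α t
  -- a geodesic from `x` to the nearest point `f α` meets the line only at `f α`
  have hmeet : ∀ s ∈ Icc 0 (dist x (f α)), ∀ u ∈ Icc 0 |t - α|, F₁ s = F₂ u → u = 0 := by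
    intro s hs u hu hsu
    obtain ⟨v, hv⟩ := hF₂ u
    have hs' : s = dist x (f α) :=
      le_antisymm hs.2 (by rw [← h₁.dist_source hs, hsu, ← hv]; exact hα v)
    have hu' := h₂.dist_source hu
    rwa [← hsu, hs', h₁.target, dist_self, eq_comm] at hu'
  have hmem := hT.mem_seg_of_concat h₁ h₂ dist_nonneg (abs_nonneg _) hmeet
  rw [← mem_seg_iff.1 hmem, hf.dist_eq, Real.dist_eq, abs_sub_comm]

theorem IsRealTree.eq_or_mem_seg_of_isLineProjection (hT : IsRealTree T) (hf : Isometry f)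
    {x y : T} {α β : ℝ} (hα : IsLineProjection f x α) (hβ : IsLineProjection f y β) :
    α = β ∨ f α ∈ seg x y := by
  refine or_iff_not_imp_left.2 fun hαβ => ?_
  have hsum := hT.dist_eq_add_add_of_mem_seg (hα.mem_seg hf β)
    (by rw [seg_comm]; exact hβ.mem_seg hf α) (hf.injective.ne hαβ)
  rw [mem_seg_iff, hsum, dist_comm (f α) y, hβ α, hf.dist_eq, Real.dist_eq, dist_comm (f β) y]
  ring

theorem IsRealTree.dist_apply_eq_of_isLineProjection (hT : IsRealTree T) (hf : Isometry f)
    {ψ : T ≃ᵢ T} {c : ℝ} (hc : c ≠ 0) (hψ : ∀ t, ψ (f t) = f (t + c)) {x : T} {α : ℝ}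
    (hα : IsLineProjection f x α) : dist x (ψ x) = 2 * dist x (f α) + |c| := by
  have hD : dist (f (α + c)) (ψ x) = dist x (f α) := by rw [← hψ, ψ.dist_eq, dist_comm]
  have hmem : f (α + c) ∈ seg (f α) (ψ x) := by
    rw [seg_comm, mem_seg_iff, (hα.map ψ hψ) α, hf.dist_eq, Real.dist_eq, abs_sub_comm]
  rw [hT.dist_eq_add_add_of_mem_seg (hα.mem_seg hf (α + c)) hmem
    (hf.injective.ne (by simpa using hc)), hD, hf.dist_eq, Real.dist_eq, sub_add_cancel_left,
    abs_neg]
  ring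

theorem Isometry.eq_add_or_eq_sub {σ : ℝ → ℝ} (hσ : Isometry σ) :
    (∀ t, σ t = t + σ 0) ∨ ∀ t, σ t = σ 0 - t := by
  have hsq : ∀ s t, (σ s - σ t) ^ 2 = (s - t) ^ 2 := fun s t => by
    rw [← sq_abs, ← Real.dist_eq, hσ.dist_eq, Real.dist_eq, sq_abs]
  have hlin : ∀ t, σ t - σ 0 = t * (σ 1 - σ 0) := fun t => by
    linear_combination (σ 1 - σ 0 - 2 * (σ t - σ 0)) / 2 * hsq 1 0 +
      (σ 1 - σ 0) / 2 * (hsq t 0 - hsq t 1)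
  rcases (by simpa using hsq 1 0 : σ 1 - σ 0 = 1 ∨ σ 1 - σ 0 = -1) with h | h
  · exact .inl fun t => by linear_combination hlin t + t * h
  · exact .inr fun t => by linear_combination hlin t + t * h

theorem Isometry.exists_translation_or_reflection (hf : Isometry f) (ψ : T ≃ᵢ T)
    (hψ : MapsTo ψ (range f) (range f)) :
    ∃ e, (∀ t, ψ (f t) = f (t + e)) ∨ ∀ t, ψ (f t) = f (e - t) := by
  choose σ hσ using fun t => hψ (mem_range_self t)
  have hσ' : Isometry σ := Isometry.of_dist_eq fun s t => by
    rw [← hf.dist_eq, hσ, hσ, ψ.dist_eq, hf.dist_eq]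
  rcases hσ'.eq_add_or_eq_sub with h | h
  · exact ⟨σ 0, .inl fun t => by rw [← hσ, h]⟩
  · exact ⟨σ 0, .inr fun t => by rw [← hσ, h]⟩

end Line

theorem eq_zero_of_forall_add_mem {K : Set ℝ} {e : ℝ} (hne : K.Nonempty) (hK : BddAbove K)
    (hK' : BddBelow K) (h : ∀ t ∈ K, t + e ∈ K) : e = 0 := by
  have h₁ : sSup K ≤ sSup K - e :=
    csSup_le hne fun t ht => le_sub_iff_add_le.2 (le_csSup hK (h t ht))
  have h₂ : sInf K - e ≤ sInf K :=
    le_csInf hne fun t ht => sub_le_iff_le_add.2 (csInf_le hK' (h t ht))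
  linarith

section Axis

variable {G : Type*} [Group G] {T : Type*} [MetricSpace T] {ρ : G →* (T ≃ᵢ T)}

theorem IsAxis.exists_translation {g : G} {A : Set T} (h : IsAxis ρ g A) :
    ∃ (f : ℝ → T) (c : ℝ), Isometry f ∧ range f = A ∧ c ≠ 0 ∧ ∀ t, ρ g (f t) = f (t + c) := by
  obtain ⟨⟨f, hf, rfl⟩, hinv, τ, hτ, hdisp⟩ := h
  obtain ⟨c, hc | hc⟩ := hf.exists_translation_or_reflection (ρ g) fun x hx => (hinv x).1 hx
  · refine ⟨f, c, hf, rfl, fun hc0 => ?_, hc⟩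
    have := hdisp (f 0) (mem_range_self 0)
    rw [hc, hc0, add_zero, dist_self] at this
    linarith
  · -- a reflection would fix `f (c / 2)`
    have := hdisp (f (c / 2)) (mem_range_self _)
    rw [hc, sub_half, dist_self] at this
    linarith

theorem IsRealTree.charSet_eq_range (hT : IsRealTree T) {g : G} {f : ℝ → T} {c : ℝ}
    (hf : Isometry f) (hc : c ≠ 0) (hg : ∀ t, ρ g (f t) = f (t + c)) :
    charSet ρ g = range f := by
  have hdisp : ∀ x, ∃ α, dist x (ρ g x) = 2 * dist x (f α) + |c| := fun x =>
    let ⟨α, hα⟩ := hT.exists_isLineProjection hf x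
    ⟨α, hT.dist_apply_eq_of_isLineProjection hf hc hg hα⟩
  have hline : ∀ t, dist (f t) (ρ g (f t)) = |c| := fun t => by
    rw [hg, hf.dist_eq, Real.dist_eq, sub_add_cancel_left, abs_neg]
  have : Nonempty T := ⟨f 0⟩
  have htl : transLen ρ g = |c| := by
    refine le_antisymm ?_ (le_ciInf fun x => ?_)
    · exact hline 0 ▸ ciInf_le ⟨0, forall_mem_range.2 fun x => dist_nonneg⟩ (f 0)
    · obtain ⟨α, hα⟩ := hdisp x
      linarith [dist_nonneg (x := x) (y := f α)]
  ext x
  change dist x (ρ g x) = transLen ρ g ↔ _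
  refine htl ▸ ⟨fun hx => ?_, fun ⟨t, ht⟩ => ht ▸ hline t⟩
  obtain ⟨α, hα⟩ := hdisp x
  exact ⟨α, (dist_eq_zero.1 (by linarith [dist_nonneg (x := x) (y := f α)])).symm⟩

variable {ι : T ≃ᵢ T}

theorem apply_mem_charSet_iff (hcomm : ∀ (g : G) (x : T), ι (ρ g x) = ρ g (ι x)) (g : G)
    (x : T) : ι x ∈ charSet ρ g ↔ x ∈ charSet ρ g := by
  change dist (ι x) (ρ g (ι x)) = _ ↔ dist x (ρ g x) = _
  rw [← hcomm, ι.dist_eq]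

end Axis

section Commuting

variable {T : Type*} [MetricSpace T] {f : ℝ → T} {ι : T ≃ᵢ T}

theorem Isometry.exists_translation_of_commute (hf : Isometry f) {ψ : T ≃ᵢ T} {c : ℝ}
    (hc : c ≠ 0) (hψ : ∀ t, ψ (f t) = f (t + c)) (hι : MapsTo ι (range f) (range f))
    (hcomm : ∀ t, ι (ψ (f t)) = ψ (ι (f t))) : ∃ e, ∀ t, ι (f t) = f (t + e) := by
  obtain ⟨e, he | he⟩ := hf.exists_translation_or_reflection ι hι
  · exact ⟨e, he⟩
  · -- a reflection conjugates the translation by `c` to the translation by `-c`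
    have := hcomm 0
    rw [hψ, he, he, hψ] at this
    exact absurd (by linarith [hf.injective this]) hc

theorem IsRealTree.translation_eq_zero_of_isBounded (hT : IsRealTree T) (hf : Isometry f)
    {f' : ℝ → T} (hf' : Isometry f') {e : ℝ} (he : ∀ t, ι (f t) = f (t + e))
    (hι : MapsTo ι (range f') (range f')) (hbdd : Bornology.IsBounded (range f ∩ range f')) :
    e = 0 := by
  set K := {α | ∃ s, IsLineProjection f (f' s) α}
  obtain ⟨α₀, hα₀⟩ := hT.exists_isLineProjection hf (f' 0)
  obtain ⟨r, hr₀, hr⟩ := hbdd.subset_closedBall_lt 0 (f α₀)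
  have hK : K ⊆ Icc (α₀ - r) (α₀ + r) := by
    rintro α ⟨s, hα⟩
    have hdist : dist (f α) (f α₀) ≤ r := by
      rcases hT.eq_or_mem_seg_of_isLineProjection hf hα hα₀ with rfl | hmem
      · rw [dist_self]
        exact hr₀.le
      · exact hr ⟨mem_range_self α, hT.seg_subset_range hf' s 0 hmem⟩
    rw [hf.dist_eq, Real.dist_eq, abs_sub_le_iff] at hdist
    exact ⟨by linarith, by linarith⟩
  refine eq_zero_of_forall_add_mem (K := K) ⟨α₀, 0, hα₀⟩ (bddAbove_Icc.mono hK)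
    (bddBelow_Icc.mono hK) ?_
  rintro α ⟨s, hα⟩
  obtain ⟨s', hs'⟩ := hι (mem_range_self s)
  exact ⟨s', hs' ▸ hα.map ι he⟩

end Commuting

namespace IsRealTree

variable {G : Type*} [Group G] {T : Type*} [MetricSpace T] {ρ : G →* (T ≃ᵢ T)} {ι : T ≃ᵢ T}

theorem isSubtree_fixedPoints (hT : IsRealTree T) (ι : T ≃ᵢ T) :
    IsSubtree (Function.fixedPoints ι) := by
  intro u hu v hv z hz
  have hιz : ι z ∈ seg u v := by
    have := mem_seg_iff.1 hz
    rwa [← ι.dist_eq u z, ← ι.dist_eq z v, hu.eq, hv.eq] at this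
  exact hT.eq_of_mem_seg_of_dist_eq hιz hz (by rw [← ι.dist_eq u z, hu.eq])

theorem exists_fixedPoint_of_commute (hT : IsRealTree T) (hne : NonelementaryTreeAction ρ)
    (hcomm : ∀ (g : G) (x : T), ι (ρ g x) = ρ g (ι x)) : ∃ p, ι p = p := by
  obtain ⟨g, h, ⟨A, hA⟩, ⟨B, hB⟩, hcpt⟩ := hne
  obtain ⟨f, c, hf, rfl, hc, hg⟩ := hA.exists_translation
  obtain ⟨f', c', hf', rfl, hc', hh⟩ := hB.exists_translation
  have hcs := hT.charSet_eq_range hf hc hg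
  have hcs' := hT.charSet_eq_range hf' hc' hh
  have hmaps : ∀ k, MapsTo ι (charSet ρ k) (charSet ρ k) := fun k x hx =>
    (apply_mem_charSet_iff hcomm k x).2 hx
  obtain ⟨e, he⟩ := hf.exists_translation_of_commute hc hg (hcs ▸ hmaps g)
    fun t => hcomm g (f t)
  have he₀ := hT.translation_eq_zero_of_isBounded hf hf' he (hcs' ▸ hmaps h)
    (hcs ▸ hcs' ▸ hcpt.isBounded)
  exact ⟨f 0, by rw [he, he₀, add_zero]⟩

theorem eq_id_of_commute (hT : IsRealTree T) (hmin : MinimalTreeAction ρ)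
    (hne : NonelementaryTreeAction ρ) (hcomm : ∀ (g : G) (x : T), ι (ρ g x) = ρ g (ι x))
    (x : T) : ι x = x := by
  have hfix := hmin (Function.fixedPoints ι) (hT.exists_fixedPoint_of_commute hne hcomm)
    (hT.isSubtree_fixedPoints ι)
    fun g y (hy : ι y = y) => (hcomm g y).trans (congrArg _ hy)
  exact (hfix ▸ mem_univ x : x ∈ Function.fixedPoints ι)

end IsRealTree

/-- An isometry of a minimal nonelementary `G`-tree commuting with the `G`-action is the
identity; in particular the center of `G` acts trivially. -/
theorem isometry_commuting_with_action_eq_id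
    (G : Type*) [Group G] (T : Type*) [MetricSpace T] (hT : IsRealTree T)
    (ρ : G →* (T ≃ᵢ T)) (hmin : MinimalTreeAction ρ) (hne : NonelementaryTreeAction ρ)
    (ι : T ≃ᵢ T) (hcomm : ∀ (g : G) (x : T), ι (ρ g x) = ρ g (ι x)) :
    (∀ x : T, ι x = x) ∧ ∀ z ∈ Subgroup.center G, ∀ x : T, ρ z x = x := by
  refine ⟨hT.eq_id_of_commute hmin hne hcomm, fun z hz =>
    hT.eq_id_of_commute hmin hne fun g x => ?_⟩
  rw [← IsometryEquiv.mul_apply, ← map_mul, ← Subgroup.mem_center_iff.1 hz g, map_mul,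
    IsometryEquiv.mul_apply]
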